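/- Equip ℕ with the topology in which a set is open if and only if it is downward closed, and let E = {n ∈ ℕ : n is even} and O = {n ∈ ℕ : n is odd}. Then the smallest family of subsets of ℕ containing both E and O and closed under topological closure and binary intersection is infinite. Consequently, there is a topological space and two subsets from which the operations closure and intersection alone generate infinitely many distinct sets. -/

import Mathlib

/-- The topology on `ℕ` in which a set is open if and only if it is downward closed
(the lower Alexandrov topology of the usual order). -/
def lowerTopology : TopologicalSpace ℕ where
  IsOpen U := ∀ ⦃m n : ℕ⦄, n ∈ U → m ≤ n → m ∈ U
  isOpen_univ := fun _ _ _ _ => trivial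
  isOpen_inter := fun _ _ hs ht _ _ hn hmn => ⟨hs hn.1 hmn, ht hn.2 hmn⟩
  isOpen_sUnion := fun _ hS _ _ hn hmn => by
    obtain ⟨s, hsS, hns⟩ := hn
    exact ⟨s, hsS, hS s hsS hns hmn⟩

/-- The family of subsets of `ℕ` generated from the evens `E` and the odds `O` by successive
applications of closure (in the lower topology) and binary intersection: the smallest
collection of subsets of `ℕ` containing `E` and `O` and closed under these operations. -/
inductive kwGenEvenOdd : Set ℕ → Prop
  | baseE : kwGenEvenOdd {n : ℕ | Even n}
  | baseO : kwGenEvenOdd {n : ℕ | Odd n}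
  | closure {A : Set ℕ} : kwGenEvenOdd A → kwGenEvenOdd (@closure ℕ lowerTopology A)
  | inter {A B : Set ℕ} : kwGenEvenOdd A → kwGenEvenOdd B → kwGenEvenOdd (A ∩ B)

/-!
Closed sets of the lower topology are the upward closed sets, so the closure of
`S n = {m ≥ n | m ≡ n mod 2}` is `[n, ∞)`, and intersecting it with the parity class of `n + 1`
(which is `E` or `O`) gives `S (n + 1)`. Starting from `S 0 = E`, the family therefore
contains every `S n`, and these are pairwise distinct since `n` is the least element of `S n`.
-/

open Set

theorem lowerTopology_eq_lowerSet : lowerTopology = Topology.lowerSet ℕ :=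
  TopologicalSpace.ext <| funext fun _ => propext
    ⟨fun hU _ _ hmn hn => hU hn hmn, fun hU _ _ hn hmn => hU hmn hn⟩

def sameParityFrom (n : ℕ) : Set ℕ := Ici n ∩ {m | m ≡ n [MOD 2]}

theorem isLeast_sameParityFrom (n : ℕ) : IsLeast (sameParityFrom n) n :=
  ⟨⟨self_mem_Ici, rfl⟩, fun _ hm => hm.1⟩

theorem sameParityFrom_injective : Function.Injective sameParityFrom := fun a b hab =>
  (isLeast_sameParityFrom a).unique (hab ▸ isLeast_sameParityFrom b)

theorem closure_sameParityFrom (n : ℕ) :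
    @closure ℕ lowerTopology (sameParityFrom n) = Ici n := by
  let := lowerTopology
  have : Topology.IsLowerSet ℕ := ⟨lowerTopology_eq_lowerSet⟩
  refine Subset.antisymm (closure_minimal inter_subset_left ?_) ?_
  · exact Topology.IsLowerSet.isClosed_iff_isUpper.2 (isUpperSet_Ici n)
  · rw [← Topology.IsLowerSet.closure_singleton]
    exact closure_mono (singleton_subset_iff.2 (isLeast_sameParityFrom n).1)

theorem sameParityFrom_succ (n : ℕ) :
    sameParityFrom (n + 1) = @closure ℕ lowerTopology (sameParityFrom n) ∩
      {m | m ≡ n + 1 [MOD 2]} := by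
  rw [closure_sameParityFrom]
  ext m
  simp only [sameParityFrom, mem_inter_iff, mem_Ici, mem_ofPred_eq, Nat.ModEq]
  omega

theorem kwGenEvenOdd_modEq_two (n : ℕ) : kwGenEvenOdd {m | m ≡ n [MOD 2]} := by
  rcases Nat.even_or_odd n with hn | hn
  · convert kwGenEvenOdd.baseE using 1
    ext m
    simp only [mem_ofPred_eq, Nat.ModEq, Nat.even_iff] at hn ⊢
    omega
  · convert kwGenEvenOdd.baseO using 1
    ext m
    simp only [mem_ofPred_eq, Nat.ModEq, Nat.odd_iff] at hn ⊢
    omega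

theorem kwGenEvenOdd_sameParityFrom (n : ℕ) : kwGenEvenOdd (sameParityFrom n) := by
  induction n with
  | zero =>
    convert kwGenEvenOdd_modEq_two 0 using 1
    simp [sameParityFrom]
  | succ n ih =>
    rw [sameParityFrom_succ]
    exact ih.closure.inter (kwGenEvenOdd_modEq_two (n + 1))

/-- The smallest family of subsets of `ℕ` (with the lower topology) containing the evens and
the odds and closed under closure and binary intersection is infinite: closure and
intersection alone can generate infinitely many distinct sets from two sets. -/
theorem kwGenEvenOdd_infinite : {A : Set ℕ | kwGenEvenOdd A}.Infinite :=
  Set.infinite_of_injective_forall_mem sameParityFrom_injective kwGenEvenOdd_sameParityFrom
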